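/- Let A₁,…,A_T be matrices with A_t ∈ R^{m×n_t}, D = diag(A₁,…,A_T) block diagonal, A = [A₁ … A_T], and ρ, τ_x > 0 with τ_x > (T−1)ρ. Then for any w = (w₁,…,w_T), (ρ+τ_x) Σ_t ‖A_t w_t‖² − ρ ‖A w‖² = ‖Dw‖²_R where R = (ρ+τ_x)I − ρ E Eᵀ is positive definite and E is the vertical stack of T identity matrices of size m. In particular the left-hand side is nonnegative and zero iff Dw = 0. -/

import Mathlib

open Matrix

/-- Block-diagonal identity: `(ρ+τₓ) Σ_t ‖A_t w_t‖² − ρ ‖A w‖² = ‖Dw‖²_R` with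
`R = (ρ+τₓ)I − ρ E Eᵀ` positive definite; in particular the LHS is nonnegative and
vanishes iff `Dw = 0`. -/

theorem stmt_2 (T m : ℕ) (n : Fin T → ℕ)
    (A : ∀ t : Fin T, Matrix (Fin m) (Fin (n t)) ℝ)
    (ρ τx : ℝ) (hρ : 0 < ρ) (hτx : 0 < τx) (hτ : ((T : ℝ) - 1) * ρ < τx)
    (w : ∀ t : Fin T, Fin (n t) → ℝ) :
    let Dw : Fin T × Fin m → ℝ := fun p => (A p.1).mulVec (w p.1) p.2
    let E : Matrix (Fin T × Fin m) (Fin m) ℝ := fun p j => if p.2 = j then 1 else 0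
    let R : Matrix (Fin T × Fin m) (Fin T × Fin m) ℝ := (ρ + τx) • 1 - ρ • (E * Eᵀ)
    R.PosDef ∧
    ((ρ + τx) * ∑ t, ((A t).mulVec (w t)) ⬝ᵥ ((A t).mulVec (w t))
      - ρ * ((∑ t, (A t).mulVec (w t)) ⬝ᵥ (∑ t, (A t).mulVec (w t)))
      = Dw ⬝ᵥ R.mulVec Dw) ∧
    0 ≤ ((ρ + τx) * ∑ t, ((A t).mulVec (w t)) ⬝ᵥ ((A t).mulVec (w t))
      - ρ * ((∑ t, (A t).mulVec (w t)) ⬝ᵥ (∑ t, (A t).mulVec (w t)))) ∧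
    (((ρ + τx) * ∑ t, ((A t).mulVec (w t)) ⬝ᵥ ((A t).mulVec (w t))
      - ρ * ((∑ t, (A t).mulVec (w t)) ⬝ᵥ (∑ t, (A t).mulVec (w t)))) = 0 ↔ Dw = 0) := by
  intro Dw E R
  -- entrywise formula for R
  have hR : ∀ p q : Fin T × Fin m,
      R p q = (ρ + τx) * (if p = q then 1 else 0) - ρ * (if p.2 = q.2 then 1 else 0) := by
    intro p q
    have hEE : (E * Eᵀ) p q = if p.2 = q.2 then 1 else 0 := by
      simp only [Matrix.mul_apply, Matrix.transpose_apply]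
      simp only [E, ite_mul, one_mul, zero_mul]
      simp only [Finset.sum_ite_eq, Finset.mem_univ, if_true]
      by_cases h : p.2 = q.2
      · rw [if_pos h, if_pos h.symm]
      · rw [if_neg h, if_neg (fun e => h e.symm)]
    simp only [R, Matrix.sub_apply, Matrix.smul_apply, hEE, Matrix.one_apply, smul_eq_mul]
  -- quadratic form formula
  have hq : ∀ v : Fin T × Fin m → ℝ,
      v ⬝ᵥ R.mulVec v
        = (ρ + τx) * ∑ p, v p ^ 2 - ρ * ∑ j, (∑ t, v (t, j)) ^ 2 := by
    intro v
    have h1 : ∀ p : Fin T × Fin m,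
        R.mulVec v p = (ρ + τx) * v p - ρ * ∑ t, v (t, p.2) := by
      intro p
      simp only [Matrix.mulVec, dotProduct, hR, sub_mul, mul_assoc, ite_mul, one_mul,
        zero_mul, mul_ite, mul_zero, Finset.sum_sub_distrib]
      congr 1
      · rw [Finset.sum_ite_eq Finset.univ p (fun x => (ρ + τx) * v x)]
        simp
      · rw [Fintype.sum_prod_type_right]
        have : ∀ j : Fin m, (∑ t : Fin T, if p.2 = j then ρ * v (t, j) else 0)
            = if p.2 = j then ∑ t : Fin T, ρ * v (t, j) else 0 := by
          intro j; split <;> simp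
        simp only [this]
        rw [Finset.sum_ite_eq Finset.univ p.2 (fun j => ∑ t : Fin T, ρ * v (t, j))]
        simp [Finset.mul_sum]
    simp only [dotProduct, h1, mul_sub, Finset.sum_sub_distrib]
    congr 1
    · rw [Finset.mul_sum]
      refine Finset.sum_congr rfl fun p _ => by ring
    · rw [Fintype.sum_prod_type_right]
      rw [Finset.mul_sum]
      refine Finset.sum_congr rfl fun j _ => ?_
      show ∑ x : Fin T, v (x, j) * (ρ * ∑ t : Fin T, v (t, j)) = ρ * (∑ t : Fin T, v (t, j)) ^ 2
      rw [← Finset.sum_mul, sq]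
      ring
  -- positivity of the quadratic form
  have hpos : ∀ v : Fin T × Fin m → ℝ, v ≠ 0 → 0 < v ⬝ᵥ R.mulVec v := by
    intro v hv
    rw [hq]
    have hS : 0 < ∑ p, v p ^ 2 := by
      obtain ⟨p, hp⟩ := Function.ne_iff.1 hv
      refine Finset.sum_pos' (fun q _ => sq_nonneg _) ⟨p, Finset.mem_univ p, ?_⟩
      exact lt_of_le_of_ne (sq_nonneg _) (Ne.symm (pow_ne_zero 2 (by simpa using hp)))
    have hCS : ∑ j, (∑ t, v (t, j)) ^ 2 ≤ (T : ℝ) * ∑ p, v p ^ 2 := by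
      rw [Fintype.sum_prod_type_right, Finset.mul_sum]
      refine Finset.sum_le_sum fun j _ => ?_
      have := sq_sum_le_card_mul_sum_sq (s := Finset.univ) (f := fun t : Fin T => v (t, j))
      simpa using this
    have key : ρ * ∑ j, (∑ t, v (t, j)) ^ 2 ≤ ρ * ((T : ℝ) * ∑ p, v p ^ 2) :=
      mul_le_mul_of_nonneg_left hCS hρ.le
    have : (ρ + τx) * ∑ p, v p ^ 2 - ρ * ((T : ℝ) * ∑ p, v p ^ 2)
        = (τx - ((T : ℝ) - 1) * ρ) * ∑ p, v p ^ 2 := by ring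
    nlinarith [mul_pos (sub_pos.2 hτ) hS]
  have hherm : R.IsHermitian := by
    ext p q
    simp only [Matrix.conjTranspose_apply, star_trivial, hR]
    have h2 : (if q = p then (1:ℝ) else 0) = if p = q then 1 else 0 := by simp [eq_comm]
    have h3 : (if q.2 = p.2 then (1:ℝ) else 0) = if p.2 = q.2 then 1 else 0 := by simp [eq_comm]
    rw [h2, h3]
  have hposdef : R.PosDef := Matrix.PosDef.of_dotProduct_mulVec_pos hherm (fun v hv => by simpa using hpos v hv)
  -- the identity
  have hid : (ρ + τx) * ∑ t, ((A t).mulVec (w t)) ⬝ᵥ ((A t).mulVec (w t))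
      - ρ * ((∑ t, (A t).mulVec (w t)) ⬝ᵥ (∑ t, (A t).mulVec (w t)))
      = Dw ⬝ᵥ R.mulVec Dw := by
    rw [hq]
    congr 1
    · congr 1
      rw [Fintype.sum_prod_type]
      refine Finset.sum_congr rfl fun t _ => ?_
      simp [dotProduct, Dw, sq]
    · congr 1
      simp [dotProduct, Dw, sq, Finset.sum_apply]
  refine ⟨hposdef, hid, ?_, ?_⟩
  · rw [hid]
    by_cases h : Dw = 0
    · simp [h]
    · exact (hpos Dw h).le
  · rw [hid]
    constructor
    · intro h
      by_contra hne
      exact absurd h (ne_of_gt (hpos Dw hne))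
    · intro h
      simp [h]
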